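/- arXiv:2105.09346 — 6 statements merged into one kernel-verified Lean document; each statement's English description precedes it below -/
import Mathlib

section
/- Let M be a finite monoid satisfying the ω-identity (xzy)^ω = (xzy)^ω z (xzy)^ω (i.e., M ∈ DA), equipped with a content morphism α : M → J_A. If s, t ∈ M satisfy α(t) ≤ α(s) (i.e., α(t) ⊆ α(s)), then s^ω t s^ω = s^ω, where ω is the idempotent power of M. -/
/-- Let `M` be a finite monoid in `DA` (i.e. satisfying `(xzy)^ω = (xzy)^ω z (xzy)^ω`
where `ω` is the idempotent power of `M`), with a content morphism `α : M → J_A`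
(i.e. `α(μ(u)) = alph(u)` for a surjective `μ : A* → M`).  If `α(t) ⊆ α(s)` then
`s^ω t s^ω = s^ω`. -/
theorem da_property {M : Type*} [Monoid M] [Fintype M] {A : Type*}
    (μ : FreeMonoid A →* M) (hμ : Function.Surjective μ)
    (α : M → Set A)
    (hcontent : ∀ u : FreeMonoid A, α (μ u) = {a | a ∈ FreeMonoid.toList u})
    (ω : ℕ) (hω : 0 < ω) (hidem : ∀ u : M, IsIdempotentElem (u ^ ω))
    (hDA : ∀ x y z : M, (x * z * y) ^ ω = (x * z * y) ^ ω * z * (x * z * y) ^ ω)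
    (s t : M) (hst : α t ⊆ α s) :
    s ^ ω * t * s ^ ω = s ^ ω := by
  -- powers of an idempotent element
  have hpow : ∀ m : M, m * m = m → m ^ ω = m := by
    intro m hm
    obtain ⟨k, hk⟩ := Nat.exists_eq_succ_of_ne_zero hω.ne'
    rw [hk]
    clear hk
    induction k with
    | zero => simp
    | succ n ih => rw [pow_succ, ih, hm]
  obtain ⟨v, hv⟩ := hμ s
  obtain ⟨u, hu⟩ := hμ t
  set e := s ^ ω with he
  have heidem : e * e = e := hidem s
  -- the set {m | e * m * e = e} is closed under multiplication (the DA trick)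
  have key : ∀ x y : M, e * x * e = e → e * y * e = e → e * (x * y) * e = e := by
    intro x y hx hy
    -- h := y * e is idempotent
    have hh : (y * e) * (y * e) = y * e := by
      simp only [mul_assoc]
      rw [← mul_assoc e y e, hy]
    -- collapse: (y*e) * (e*x) * e = y*e
    have hge : (y * e) * (e * x) * e = y * e := by
      simp only [mul_assoc]
      rw [← mul_assoc e x e, hx, heidem]
    -- apply the DA identity with x := y*e, y := e, z := e*x
    have hda := hDA (y * e) e (e * x)
    rw [hge, hpow (y * e) hh] at hda
    -- hda : y * e = y * e * (e * x) * (y * e)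
    have hda' : y * e = y * (e * (e * (x * (y * e)))) := by
      simpa only [mul_assoc] using hda
    have heh : e * (y * e) = e := by rw [← mul_assoc]; exact hy
    have h2 : e = e * (y * (e * (e * (x * (y * e))))) := by
      conv_lhs => rw [← heh, hda']
    have h3 : e * (y * (e * (e * (x * (y * e))))) = e * (x * (y * e)) := by
      simp only [← mul_assoc]
      rw [hy, heidem]
    simp only [mul_assoc]
    rw [← h3, ← h2]
  -- each letter occurring in v is absorbed by e
  have letter : ∀ a : A, a ∈ FreeMonoid.toList v → e * μ (FreeMonoid.of a) * e = e := by
    intro a ha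
    obtain ⟨l₁, l₂, hsplit⟩ := List.append_of_mem ha
    have hv2 : FreeMonoid.ofList l₁ * FreeMonoid.of a * FreeMonoid.ofList l₂ = v := by
      rw [mul_assoc, ← FreeMonoid.ofList_cons, ← FreeMonoid.ofList_append, ← hsplit,
        FreeMonoid.ofList_toList]
    have hfact : μ (FreeMonoid.ofList l₁) * μ (FreeMonoid.of a) * μ (FreeMonoid.ofList l₂)
        = s := by
      rw [← map_mul, ← map_mul, hv2, hv]
    have hda := hDA (μ (FreeMonoid.ofList l₁)) (μ (FreeMonoid.ofList l₂)) (μ (FreeMonoid.of a))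
    rw [hfact] at hda
    exact hda.symm
  -- products of absorbed letters are absorbed
  have main : ∀ l : List A, (∀ a ∈ l, a ∈ FreeMonoid.toList v) →
      e * μ (FreeMonoid.ofList l) * e = e := by
    intro l
    induction l with
    | nil =>
        intro _
        show e * μ (FreeMonoid.ofList []) * e = e
        have h1 : μ (FreeMonoid.ofList []) = 1 := map_one μ
        rw [h1, mul_one, heidem]
    | cons a l ih =>
        intro hmem
        rw [FreeMonoid.ofList_cons, map_mul]
        exact key _ _ (letter a (hmem a List.mem_cons_self))
          (ih fun b hb => hmem b (List.mem_cons_of_mem a hb))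
  -- letters of u occur in v
  have hsub : ∀ a ∈ FreeMonoid.toList u, a ∈ FreeMonoid.toList v := by
    intro a ha
    have h1 : a ∈ α t := by
      rw [← hu, hcontent]; exact ha
    have h2 : a ∈ α s := hst h1
    rw [← hv, hcontent] at h2
    exact h2
  have hfin := main (FreeMonoid.toList u) hsub
  rwa [FreeMonoid.ofList_toList, hu] at hfin
end

section
/- Let M be a finite monoid. Define s ∼_K t if for every idempotent e ∈ M, either both es and et are strictly J-below e, or es = et. Then ∼_K is a congruence on M. -/
/-- Green's `J`-preorder: `s ≤_J t` iff `s ∈ M t M`. -/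
def JLe {M : Type*} [Monoid M] (s t : M) : Prop := ∃ x y : M, s = x * t * y

/-- Strict `J`-order. -/
def JLt {M : Type*} [Monoid M] (s t : M) : Prop := JLe s t ∧ ¬ JLe t s

/-- `s ∼_K t` iff for every idempotent `e`, either `es` and `et` are both strictly
`J`-below `e`, or `es = et`. -/
def simK {M : Type*} [Monoid M] (s t : M) : Prop :=
  ∀ e : M, e * e = e → ((JLt (e * s) e ∧ JLt (e * t) e) ∨ e * s = e * t)

section Aux

variable {M : Type*} [Monoid M]

lemma jle_emul (e s : M) : JLe (e * s) e := ⟨1, s, by rw [one_mul]⟩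

lemma simK_symm {s t : M} (h : simK s t) : simK t s := by
  intro e he
  rcases h e he with ⟨h1, h2⟩ | heq
  · exact Or.inl ⟨h2, h1⟩
  · exact Or.inr heq.symm

lemma exists_idem_pow_aux (m : M) {i p : ℕ} (hp : 0 < p) (h : m ^ i = m ^ (i + p)) :
    ∃ n, 0 < n ∧ m ^ n * m ^ n = m ^ n := by
  have claim : ∀ c d, m ^ (i + d + c * p) = m ^ (i + d) := by
    intro c
    induction c with
    | zero => intro d; simp
    | succ c ih =>
      intro d
      have he : i + d + (c + 1) * p = (i + p) + (d + c * p) := by ring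
      rw [he, pow_add, ← h, ← pow_add]
      have he2 : i + (d + c * p) = i + d + c * p := by ring
      rw [he2, ih d]
  refine ⟨(i + 1) * p, by positivity, ?_⟩
  set n := (i + 1) * p with hn
  have hin : i ≤ n := by
    calc i ≤ (i + 1) * 1 := by omega
    _ ≤ (i + 1) * p := Nat.mul_le_mul_left _ hp
  have h1 : n + n = i + (n - i) + (i + 1) * p := by omega
  rw [← pow_add, h1, claim (i + 1) (n - i)]
  congr 1
  omega

lemma exists_idem_pow [Fintype M] (m : M) : ∃ n, 0 < n ∧ m ^ n * m ^ n = m ^ n := by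
  obtain ⟨i, j, hne, hij'⟩ := Finite.exists_ne_map_eq_of_infinite (fun k : ℕ => m ^ k)
  have hij : m ^ i = m ^ j := hij'
  rcases lt_or_gt_of_ne hne with hlt | hlt
  · exact exists_idem_pow_aux m (p := j - i) (by omega) (by rw [hij]; congr 1; omega)
  · exact exists_idem_pow_aux m (p := i - j) (by omega) (by rw [← hij]; congr 1; omega)

/-- Stability-style lemma: if `e` is idempotent and `e ≤_J e*w`, then `e ∈ (e*w)M`. -/
lemma stab [Fintype M] {e w a b : M} (he : e * e = e) (h : e = a * (e * w) * b) :
    ∃ r, e * w * r = e := by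
  have claim : ∀ c, a ^ c * e * (w * b) ^ c = e := by
    intro c
    induction c with
    | zero => simp
    | succ c ih =>
      rw [pow_succ' a, pow_succ (w * b)]
      calc a * a ^ c * e * ((w * b) ^ c * (w * b))
          = a * (a ^ c * e * (w * b) ^ c) * (w * b) := by simp only [mul_assoc]
        _ = a * e * (w * b) := by rw [ih]
        _ = a * (e * w) * b := by simp only [mul_assoc]
        _ = e := h.symm
  obtain ⟨n, hn, hidem⟩ := exists_idem_pow (w * b)
  refine ⟨b * (w * b) ^ (n - 1), ?_⟩
  have h1 : e * (w * b) ^ n = e := by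
    calc e * (w * b) ^ n = (a ^ n * e * (w * b) ^ n) * (w * b) ^ n := by rw [claim n]
      _ = a ^ n * e * ((w * b) ^ n * (w * b) ^ n) := by simp only [mul_assoc]
      _ = a ^ n * e * (w * b) ^ n := by rw [hidem]
      _ = e := claim n
  calc e * w * (b * (w * b) ^ (n - 1)) = e * ((w * b) * (w * b) ^ (n - 1)) := by
        simp only [mul_assoc]
    _ = e * (w * b) ^ n := by rw [← pow_succ']; congr 2; omega
    _ = e := h1

lemma simK_aux [Fintype M] {s t : M} (h : simK s t) (x e : M) (he : e * e = e)
    (hle : JLe e (e * (x * s))) : e * (x * s) = e * (x * t) := by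
  obtain ⟨a, b, hab⟩ := hle
  obtain ⟨r, hr⟩ := stab he hab
  set g := s * (r * (e * x)) with hg
  have hstep : (e * x) * g = e * x := by
    calc (e * x) * (s * (r * (e * x))) = (e * (x * s) * r) * (e * x) := by
          simp only [mul_assoc]
      _ = e * (e * x) := by rw [hr]
      _ = (e * e) * x := by rw [mul_assoc]
      _ = e * x := by rw [he]
  have hgfix : ∀ c, (e * x) * g ^ c = e * x := by
    intro c
    induction c with
    | zero => simp
    | succ c ih =>
      rw [pow_succ, ← mul_assoc, ih, hstep]
  obtain ⟨n, hn, hidem⟩ := exists_idem_pow g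
  have hfle : JLe (g ^ n) (g ^ n * s) := by
    refine ⟨1, (r * (e * x)) * g ^ (n - 1), ?_⟩
    rw [one_mul]
    calc g ^ n = g ^ n * g ^ n := hidem.symm
      _ = g ^ n * (g * g ^ (n - 1)) := by rw [← pow_succ']; congr 2; omega
      _ = g ^ n * s * (r * (e * x) * g ^ (n - 1)) := by rw [hg]; simp only [mul_assoc]
  have hfs : g ^ n * s = g ^ n * t := by
    rcases h (g ^ n) hidem with ⟨⟨_, hns⟩, _⟩ | heq
    · exact absurd hfle hns
    · exact heq
  calc e * (x * s) = (e * x) * s := by rw [mul_assoc]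
    _ = ((e * x) * g ^ n) * s := by rw [hgfix n]
    _ = (e * x) * (g ^ n * s) := by rw [mul_assoc]
    _ = (e * x) * (g ^ n * t) := by rw [hfs]
    _ = ((e * x) * g ^ n) * t := (mul_assoc _ _ _).symm
    _ = (e * x) * t := by rw [hgfix n]
    _ = e * (x * t) := by rw [mul_assoc]

lemma simK_left_mul [Fintype M] {s t : M} (h : simK s t) (x : M) : simK (x * s) (x * t) := by
  intro e he
  by_cases h1 : JLe e (e * (x * s))
  · exact Or.inr (simK_aux h x e he h1)
  by_cases h2 : JLe e (e * (x * t))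
  · exact Or.inr (simK_aux (simK_symm h) x e he h2).symm
  · exact Or.inl ⟨⟨jle_emul _ _, h1⟩, ⟨jle_emul _ _, h2⟩⟩

lemma simK_right_mul {s t : M} (h : simK s t) (y : M) : simK (s * y) (t * y) := by
  intro e he
  rcases h e he with ⟨⟨_, hs2⟩, ⟨_, ht2⟩⟩ | heq
  · left
    constructor
    · refine ⟨jle_emul _ _, fun hle => hs2 ?_⟩
      obtain ⟨a, b, hab⟩ := hle
      exact ⟨a, y * b, hab.trans (by simp only [mul_assoc])⟩
    · refine ⟨jle_emul _ _, fun hle => ht2 ?_⟩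
      obtain ⟨a, b, hab⟩ := hle
      exact ⟨a, y * b, hab.trans (by simp only [mul_assoc])⟩
  · right
    rw [← mul_assoc, ← mul_assoc, heq]

end Aux

/-- On a finite monoid, `∼_K` is a congruence. -/
theorem simK_congruence {M : Type*} [Monoid M] [Fintype M] :
    Equivalence (simK (M := M)) ∧
    (∀ x y s t : M, simK s t → simK (x * s * y) (x * t * y)) := by
  constructor
  · refine ⟨fun s e he => Or.inr rfl, simK_symm, ?_⟩
    intro s t u hst htu e he
    rcases hst e he with ⟨hs, ht⟩ | heq1
    · rcases htu e he with ⟨_, hu⟩ | heq2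
      · exact Or.inl ⟨hs, hu⟩
      · exact Or.inl ⟨hs, heq2 ▸ ht⟩
    · rcases htu e he with ⟨ht, hu⟩ | heq2
      · exact Or.inl ⟨heq1 ▸ ht, hu⟩
      · exact Or.inr (heq1.trans heq2)
  · intro x y s t h
    have h2 := simK_left_mul (simK_right_mul h y) x
    rw [mul_assoc x s y, mul_assoc x t y]
    exact h2
end

section
/- Let μ : A* → M be a homomorphism to a finite monoid M, and let R be a number such that every edge-coloring of the complete graph on R vertices with colors in M contains a monochrome triangle (a Ramsey number of M). If v is a μ-minor of some word u, then |v| ≤ R − 2. -/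
/-- If `R` is a Ramsey number of the finite monoid `M` and `v` is a `μ`-minor of some
word `u`, then `|v| ≤ R - 2`. -/
theorem minor_length_le {A M : Type*} [Monoid M] [Fintype M] (μ : FreeMonoid A →* M)
    (R : ℕ)
    (hR : ∀ c : Fin R → Fin R → M, ∃ i j k : Fin R, i < j ∧ j < k ∧
      c i j = c j k ∧ c i j = c i k)
    (u v : FreeMonoid A)
    (hsub : (FreeMonoid.toList v).Sublist (FreeMonoid.toList u))
    (heq : μ v = μ u)
    (hmin : ∀ w : FreeMonoid A, (FreeMonoid.toList w).Sublist (FreeMonoid.toList v) →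
      w ≠ v → μ w ≠ μ v) :
    (FreeMonoid.toList v).length ≤ R - 2 := by
  by_contra h
  push_neg at h
  set l := FreeMonoid.toList v with hl
  have hn : R ≤ l.length + 1 := by omega
  set φ : List A → M := fun x => μ (FreeMonoid.ofList x) with hφ
  have hφmul : ∀ x y : List A, φ (x ++ y) = φ x * φ y := by
    intro x y
    simp [hφ, FreeMonoid.ofList_append, map_mul]
  obtain ⟨i, j, k, hij, hjk, h1, h2⟩ :=
    hR (fun i j => φ ((l.take j).drop i))
  have hkn : (k : ℕ) ≤ l.length := by have := k.isLt; omega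
  have hjn : (j : ℕ) ≤ l.length := by have := j.isLt; omega
  have hij' : (i : ℕ) ≤ j := le_of_lt hij
  have hjk' : (j : ℕ) ≤ k := le_of_lt hjk
  set a := l.take i with ha
  set b := (l.take j).drop i with hb
  set d := (l.take k).drop j with hd
  set e := l.drop k with he
  have htj : l.take (j : ℕ) = a ++ b := by
    have : a = (l.take (j : ℕ)).take i := by
      rw [List.take_take, min_eq_left hij']
    rw [this, hb]
    exact (List.take_append_drop _ _).symm
  have htk : l.take (k : ℕ) = l.take (j : ℕ) ++ d := by
    have : l.take (j : ℕ) = (l.take (k : ℕ)).take j := by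
      rw [List.take_take, min_eq_left hjk']
    rw [this, hd]
    exact (List.take_append_drop _ _).symm
  have hlsplit : l = a ++ b ++ d ++ e := by
    conv_lhs => rw [← List.take_append_drop (k : ℕ) l]
    rw [htk, htj, he]
  have hlenj : (l.take (j : ℕ)).length = (j : ℕ) := by
    rw [List.length_take, min_eq_left hjn]
  -- (l.take k).drop i = b ++ d
  have hbd : (l.take (k : ℕ)).drop i = b ++ d := by
    rw [htk, List.drop_append, hlenj,
      Nat.sub_eq_zero_of_le hij', List.drop_zero, hb]
  -- h2 : φ b = φ (b ++ d)
  rw [hbd] at h2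
  set w : FreeMonoid A := FreeMonoid.ofList (a ++ b ++ e) with hw
  have hwl : FreeMonoid.toList w = a ++ b ++ e := rfl
  have hdlen : d.length = (k : ℕ) - j := by
    rw [hd, List.length_drop, List.length_take, min_eq_left hkn]
  have hsubw : (FreeMonoid.toList w).Sublist l := by
    rw [hwl, hlsplit, List.append_assoc (a ++ b) d e]
    exact (List.sublist_append_right d e).append_left (a ++ b)
  have hlenlt : (FreeMonoid.toList w).length < l.length := by
    rw [hwl, hlsplit]
    simp only [List.length_append]
    have : 0 < d.length := by omega
    omega
  have hne : w ≠ v := by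
    intro hcontra
    rw [hcontra] at hlenlt
    exact lt_irrefl _ hlenlt
  have hμw : μ w = μ v := by
    have hv : μ v = φ l := rfl
    rw [hv, hlsplit]
    show φ (a ++ b ++ e) = φ (a ++ b ++ d ++ e)
    rw [List.append_assoc a b e, hφmul a, List.append_assoc (a ++ b) d e,
      List.append_assoc a b (d ++ e), hφmul a, ← List.append_assoc b d e,
      hφmul (b ++ d) e, ← h2, hφmul b e]
  exact hmin w hsubw hne hμw
end

section
/- Let μ : A* → M be a homomorphism to a finite monoid, and let R be a Ramsey number of the monoid 2^M (with setwise multiplication). Suppose U ⊆ A* admits a factorization U = U₁U₂⋯Uₙ with n ≥ R − 1 (every u ∈ U factors as u = u₁⋯uₙ with uᵢ ∈ Uᵢ). Then there exist indices 1 ≤ i ≤ j ≤ n such that the set S = μ(Uᵢ Uᵢ₊₁ ⋯ Uⱼ) ⊆ M is subidempotent, i.e., S ⊆ S·S. -/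
open Pointwise

/-- Splitting lemma: the image of a segment `[a, c-1]` is contained in the
product of the images of `[a, b-1]` and `[b, c-1]`, when `a < b < c`. -/
lemma seg_split {A M : Type*} [Monoid M] (μ : FreeMonoid A →* M) {n : ℕ}
    (Us : Fin n → Set (FreeMonoid A)) (a b c : ℕ) (hab : a < b) (hbc : b < c) :
    {m : M | ∃ f : Fin n → FreeMonoid A,
        (∀ k : Fin n, a ≤ (k : ℕ) → (k : ℕ) ≤ c - 1 → f k ∈ Us k) ∧
        m = μ (((List.ofFn f).drop a).take (c - 1 - a + 1)).prod} ⊆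
      {m : M | ∃ f : Fin n → FreeMonoid A,
        (∀ k : Fin n, a ≤ (k : ℕ) → (k : ℕ) ≤ b - 1 → f k ∈ Us k) ∧
        m = μ (((List.ofFn f).drop a).take (b - 1 - a + 1)).prod} *
      {m : M | ∃ f : Fin n → FreeMonoid A,
        (∀ k : Fin n, b ≤ (k : ℕ) → (k : ℕ) ≤ c - 1 → f k ∈ Us k) ∧
        m = μ (((List.ofFn f).drop b).take (c - 1 - b + 1)).prod} := by
  rintro m ⟨f, hf, rfl⟩
  have key : (((List.ofFn f).drop a).take (c - 1 - a + 1)) =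
      (((List.ofFn f).drop a).take (b - 1 - a + 1)) ++
      (((List.ofFn f).drop b).take (c - 1 - b + 1)) := by
    have h1 : c - 1 - a + 1 = (b - 1 - a + 1) + (c - 1 - b + 1) := by omega
    rw [h1, List.take_add, List.drop_drop]
    have h2' : a + (b - 1 - a + 1) = b := by omega
    rw [h2']
  rw [key, List.prod_append, map_mul]
  exact Set.mul_mem_mul
    ⟨f, fun k h1 h2 => hf k h1 (by omega), rfl⟩
    ⟨f, fun k h1 h2 => hf k (by omega) h2, rfl⟩

/-- Let `R` be a Ramsey number of `2^M` and suppose `U ⊆ A*` has a factorization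
`U = U₁ ⋯ Uₙ` with `n ≥ R - 1` (every `u ∈ U` factors with the `i`-th factor in `Uᵢ`).
Then some `S = μ(Uᵢ ⋯ Uⱼ)` is subidempotent, i.e. `S ⊆ S·S`. -/
theorem exists_subidempotent_segment {A M : Type*} [Monoid M] [Fintype M]
    (μ : FreeMonoid A →* M) (R : ℕ)
    (hR : ∀ c : Fin R → Fin R → Set M, ∃ i j k : Fin R, i < j ∧ j < k ∧
      c i j = c j k ∧ c i j = c i k)
    (n : ℕ) (hn : R - 1 ≤ n)
    (U : Set (FreeMonoid A)) (Us : Fin n → Set (FreeMonoid A))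
    (hfact : ∀ u ∈ U, ∃ f : Fin n → FreeMonoid A,
      (∀ k : Fin n, f k ∈ Us k) ∧ u = (List.ofFn f).prod) :
    ∃ i j : Fin n, i ≤ j ∧
      (fun S : Set M => S ⊆ S * S)
        {m : M | ∃ f : Fin n → FreeMonoid A,
          (∀ k : Fin n, i ≤ k → k ≤ j → f k ∈ Us k) ∧
          m = μ (((List.ofFn f).drop (i : ℕ)).take ((j : ℕ) - (i : ℕ) + 1)).prod} := by
  classical
  -- The segment sets, indexed by natural number endpoints.
  set Sg : ℕ → ℕ → Set M := fun a b =>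
    {m : M | ∃ f : Fin n → FreeMonoid A,
        (∀ k : Fin n, a ≤ (k : ℕ) → (k : ℕ) ≤ b → f k ∈ Us k) ∧
        m = μ (((List.ofFn f).drop a).take (b - a + 1)).prod} with hSg
  obtain ⟨i, j, k, hij, hjk, h1, h2⟩ :=
    hR (fun x y => Sg (x : ℕ) ((y : ℕ) - 1))
  have hij' : (i : ℕ) < (j : ℕ) := hij
  have hjk' : (j : ℕ) < (k : ℕ) := hjk
  have hk : (k : ℕ) ≤ n := by
    have := k.isLt
    omega
  have hn2 : (j : ℕ) - 1 < n := by omega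
  refine ⟨⟨(i : ℕ), by omega⟩, ⟨(j : ℕ) - 1, hn2⟩, by simp [Fin.le_def]; omega, ?_⟩
  simp only [Fin.val_mk]
  show Sg (i : ℕ) ((j : ℕ) - 1) ⊆ Sg (i : ℕ) ((j : ℕ) - 1) * Sg (i : ℕ) ((j : ℕ) - 1)
  calc Sg (i : ℕ) ((j : ℕ) - 1)
      = Sg (i : ℕ) ((k : ℕ) - 1) := h2
    _ ⊆ Sg (i : ℕ) ((j : ℕ) - 1) * Sg (j : ℕ) ((k : ℕ) - 1) :=
        seg_split μ Us (i : ℕ) (j : ℕ) (k : ℕ) hij' hjk'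
    _ = Sg (i : ℕ) ((j : ℕ) - 1) * Sg (i : ℕ) ((j : ℕ) - 1) := by rw [← h1]
end

section
/- Let M, M' be finite monoids and π : M' → M a surjective monoid homomorphism. Fix a variety of finite monoids V. Then a subset P ⊆ M is pointlike with respect to V if and only if there exists P' ⊆ M' pointlike with respect to V such that P ⊆ π(P'). -/
def IsRelMorphism {M N : Type} [Monoid M] [Monoid N] (τ : M → Set N) : Prop :=
  (1 : N) ∈ τ 1 ∧ (∀ s : M, (τ s).Nonempty) ∧
    ∀ s t : M, ∀ x ∈ τ s, ∀ y ∈ τ t, x * y ∈ τ (s * t)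

/-- `P ⊆ M` is pointlike with respect to a class `V` of (finite) monoids if for every
relational morphism `τ : M → N` with `N ∈ V`, the sets `τ(s)`, `s ∈ P`, have a common
element. -/
def IsVPointlike {M : Type} [Monoid M]
    (V : (N : Type) → Monoid N → Prop) (P : Set M) : Prop :=
  ∀ (N : Type) (instN : Monoid N), V N instN →
    ∀ τ : M → Set N, @IsRelMorphism M N _ instN τ →
      ∃ x : N, ∀ s ∈ P, x ∈ τ s

/-- Auxiliary: a relational morphism from `M'` into some member of `V`. -/
structure RelWitness (M' : Type) [Monoid M'] (V : (N : Type) → Monoid N → Prop) where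
  N : Type
  inst : Monoid N
  hV : V N inst
  τ : M' → Set N
  hτ : @IsRelMorphism M' N _ inst τ

attribute [instance] RelWitness.inst

lemma relwitness_combine {M' : Type} [Monoid M'] {V : (N : Type) → Monoid N → Prop}
    (hVprod : ∀ (N₁ N₂ : Type) (i₁ : Monoid N₁) (i₂ : Monoid N₂),
      V N₁ i₁ → V N₂ i₂ → V (N₁ × N₂) (@Prod.instMonoid N₁ N₂ i₁ i₂))
    (hUnit : V Unit inferInstance)
    (L : List (RelWitness M' V)) :
    ∃ w : RelWitness M' V, ∀ (S : Set M') (x : w.N), (∀ m ∈ S, x ∈ w.τ m) →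
      ∀ i ∈ L, ∃ y : i.N, ∀ m ∈ S, y ∈ i.τ m := by
  induction L with
  | nil =>
    refine ⟨⟨Unit, inferInstance, hUnit, fun _ => Set.univ,
      Set.mem_univ _, fun _ => ⟨1, Set.mem_univ _⟩,
      fun _ _ _ _ _ _ => Set.mem_univ _⟩, ?_⟩
    intro S x hx i hi
    exact absurd hi List.not_mem_nil
  | cons a L ih =>
    obtain ⟨w, hw⟩ := ih
    refine ⟨⟨a.N × w.N, inferInstance, hVprod _ _ _ _ a.hV w.hV,
      fun m => a.τ m ×ˢ w.τ m, ⟨a.hτ.1, w.hτ.1⟩,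
      fun s => (a.hτ.2.1 s).prod (w.hτ.2.1 s),
      fun s t x hx y hy => ⟨a.hτ.2.2 s t x.1 hx.1 y.1 hy.1,
        w.hτ.2.2 s t x.2 hx.2 y.2 hy.2⟩⟩, ?_⟩
    intro S x hx i hi
    rcases List.mem_cons.1 hi with h | h
    · subst h
      exact ⟨x.1, fun m hm => (hx m hm).1⟩
    · exact hw S x.2 (fun m hm => (hx m hm).2) i h

/-- Let `π : M' → M` be a surjective homomorphism of finite monoids and `V` a variety
(closed under finite direct products and division).  Then `P ⊆ M` is `V`-pointlike
iff there is a `V`-pointlike `P' ⊆ M'` with `P ⊆ π(P')`. -/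
theorem pointlike_lift_along_surjection {M M' : Type}
    [Monoid M] [Fintype M] [Monoid M'] [Fintype M']
    (π : M' →* M) (hπ : Function.Surjective π)
    (V : (N : Type) → Monoid N → Prop)
    (hVprod : ∀ (N₁ N₂ : Type) (i₁ : Monoid N₁) (i₂ : Monoid N₂),
      V N₁ i₁ → V N₂ i₂ → V (N₁ × N₂) (@Prod.instMonoid N₁ N₂ i₁ i₂))
    (hVdiv : ∀ (N N' : Type) (iN : Monoid N) (iN' : Monoid N'),
      V N' iN' →
      (∃ τ : N → Set N', @IsRelMorphism N N' iN iN' τ ∧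
        ∀ s s' : N, (τ s ∩ τ s').Nonempty → s = s') →
      V N iN)
    (P : Set M) :
    IsVPointlike V P ↔ ∃ P' : Set M', IsVPointlike V P' ∧ P ⊆ π '' P' := by
  constructor
  · -- forward direction
    intro hP
    by_cases hall : ∀ P' : Set M', P ⊆ π '' P' → ¬ IsVPointlike V P'
    · exfalso
      have hPuniv : P ⊆ π '' (Set.univ : Set M') := by
        intro s _
        obtain ⟨m', hm'⟩ := hπ s
        exact ⟨m', Set.mem_univ _, hm'⟩
      have huniv := hall Set.univ hPuniv
      rw [IsVPointlike] at huniv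
      push_neg at huniv
      obtain ⟨N₀, i₀, hV₀, -⟩ := huniv
      letI := i₀
      have hUnit : V Unit inferInstance := by
        refine hVdiv Unit N₀ inferInstance i₀ hV₀
          ⟨fun _ => Set.univ, ⟨Set.mem_univ _, fun _ => ⟨1, Set.mem_univ _⟩,
            fun _ _ _ _ _ _ => Set.mem_univ _⟩, fun s s' _ => Subsingleton.elim s s'⟩
      have hwit : ∀ P' : Set M', ∃ w : RelWitness M' V,
          P ⊆ π '' P' → ¬∃ y : w.N, ∀ m ∈ P', y ∈ w.τ m := by
        intro P'
        by_cases h : P ⊆ π '' P'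
        · have hbad := hall P' h
          rw [IsVPointlike] at hbad
          push_neg at hbad
          obtain ⟨N, inst, hV, τ, hτ, hno⟩ := hbad
          refine ⟨⟨N, inst, hV, τ, hτ⟩, fun _ => ?_⟩
          rintro ⟨y, hy⟩
          obtain ⟨s, hs, hns⟩ := hno y
          exact hns (hy s hs)
        · exact ⟨⟨Unit, inferInstance, hUnit, fun _ => Set.univ,
            Set.mem_univ _, fun _ => ⟨1, Set.mem_univ _⟩,
            fun _ _ _ _ _ _ => Set.mem_univ _⟩, fun hc => absurd hc h⟩
      choose wit hwit' using hwit
      haveI : Fintype (Set M') := Fintype.ofFinite _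
      set L : List (RelWitness M' V) := (Finset.univ : Finset (Set M')).toList.map wit with hL
      obtain ⟨w, hw⟩ := relwitness_combine hVprod hUnit L
      set σ : M → Set w.N := fun s => {x | ∃ m', π m' = s ∧ x ∈ w.τ m'} with hσdef
      have hσ : IsRelMorphism σ := by
        refine ⟨⟨1, map_one π, w.hτ.1⟩, ?_, ?_⟩
        · intro s
          obtain ⟨m', hm'⟩ := hπ s
          obtain ⟨x, hx⟩ := w.hτ.2.1 m'
          exact ⟨x, m', hm', hx⟩
        · rintro s t a ⟨m, hm, ha⟩ b ⟨n, hn, hb⟩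
          exact ⟨m * n, by rw [map_mul, hm, hn], w.hτ.2.2 m n a ha b hb⟩
      obtain ⟨x, hx⟩ := hP w.N w.inst w.hV σ hσ
      set P'₀ : Set M' := {m' | π m' ∈ P ∧ x ∈ w.τ m'} with hP0
      have hsub : P ⊆ π '' P'₀ := by
        intro s hs
        obtain ⟨m', hm1, hm2⟩ := hx s hs
        exact ⟨m', ⟨by rw [hm1]; exact hs, hm2⟩, hm1⟩
      have hcommon : ∀ m ∈ P'₀, x ∈ w.τ m := fun m hm => hm.2
      have hmem : wit P'₀ ∈ L :=
        List.mem_map_of_mem (Finset.mem_toList.2 (Finset.mem_univ _))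
      obtain ⟨y, hy⟩ := hw P'₀ x hcommon (wit P'₀) hmem
      exact (hwit' P'₀ hsub) ⟨y, hy⟩
    · push_neg at hall
      obtain ⟨P', h1, h2⟩ := hall
      exact ⟨P', h2, h1⟩
  · -- backward direction
    rintro ⟨P', hP', hsub⟩
    intro N instN hVN τ hτ
    letI := instN
    have hσ : @IsRelMorphism M' N _ instN (fun m' => τ (π m')) := by
      refine ⟨?_, fun s => hτ.2.1 (π s), ?_⟩
      · simpa using hτ.1
      · intro s t a ha b hb
        have := hτ.2.2 (π s) (π t) a ha b hb
        simpa [map_mul] using this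
    obtain ⟨x, hx⟩ := hP' N instN hVN (fun m' => τ (π m')) hσ
    refine ⟨x, fun s hs => ?_⟩
    obtain ⟨s', hs', rfl⟩ := hsub hs
    exact hx s' hs'
end

section
/- Let u ∈ A* and n ≥ 1. If i, j both belong to R_n(u) with i < j, then there exists k ∈ L_n(u) with i < k ≤ j. -/
/-- The factor `u[i,j)` of a word (1-indexed positions `i, …, j-1`; empty if `i = j`). -/
def wordFactor {A : Type*} (u : List A) (i j : ℕ) : List A :=
  (u.drop (i - 1)).take (j - i)

/-- A word `w` is `n`-long if every word over `alph(w)` of length at most `n` is a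
scattered subword of `w`. -/
def IsNLong {A : Type*} (n : ℕ) (w : List A) : Prop :=
  ∀ v : List A, (∀ a ∈ v, a ∈ w) → v.length ≤ n → v.Sublist w

/-- `u[i,j)` is a maximal `n`-long factor of `u`: it is `n`-long and not properly
contained in any other `n`-long factor of `u`. -/
def IsMaxNLongFactor {A : Type*} (n : ℕ) (u : List A) (i j : ℕ) : Prop :=
  1 ≤ i ∧ i ≤ j ∧ j ≤ u.length + 1 ∧ IsNLong n (wordFactor u i j) ∧
    ∀ i' j' : ℕ, 1 ≤ i' → i' ≤ i → j ≤ j' → j' ≤ u.length + 1 →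
      IsNLong n (wordFactor u i' j') → i' = i ∧ j' = j

/-- `R_n(u) = {0} ∪ {i | u[j,i) is a maximal n-long factor for some j}`. -/
def Rset {A : Type*} (n : ℕ) (u : List A) : Set ℕ :=
  {0} ∪ {i | ∃ j, IsMaxNLongFactor n u j i}

/-- `L_n(u) = {|u|+1} ∪ {i | u[i+1,j) is a maximal n-long factor for some j}`. -/
def Lset {A : Type*} (n : ℕ) (u : List A) : Set ℕ :=
  {u.length + 1} ∪ {i | ∃ j, IsMaxNLongFactor n u (i + 1) j}

section Aux

variable {A : Type*}

lemma isNLong_nil (n : ℕ) : IsNLong n ([] : List A) := by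
  intro v hv _
  have : v = [] := List.eq_nil_iff_forall_not_mem.2 (fun a ha => by simpa using hv a ha)
  simp [this]

lemma isNLong_append (n : ℕ) {w t : List A} (hw : IsNLong n w) (ht : ∀ c ∈ t, c ∈ w) :
    IsNLong n (w ++ t) := by
  intro v hv hlen
  have hsub : v.Sublist w := by
    refine hw v (fun a ha => ?_) hlen
    rcases List.mem_append.1 (hv a ha) with h | h
    · exact h
    · exact ht a h
  exact hsub.trans (List.sublist_append_left w t)

lemma isNLong_prepend (n : ℕ) {w t : List A} (hw : IsNLong n w) (ht : ∀ c ∈ t, c ∈ w) :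
    IsNLong n (t ++ w) := by
  intro v hv hlen
  have hsub : v.Sublist w := by
    refine hw v (fun a ha => ?_) hlen
    rcases List.mem_append.1 (hv a ha) with h | h
    · exact ht a h
    · exact h
  exact hsub.trans (List.sublist_append_right t w)

lemma wordFactor_split (u : List A) {p m i : ℕ} (hp : 1 ≤ p) (hpm : p ≤ m) (hmi : m ≤ i) :
    wordFactor u p i = wordFactor u p m ++ wordFactor u m i := by
  unfold wordFactor
  have h1 : u.drop (m - 1) = (u.drop (p - 1)).drop (m - p) := by
    rw [List.drop_drop]
    congr 1
    omega
  rw [h1, show i - p = (m - p) + (i - m) by omega, List.take_add]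

lemma wordFactor_self (u : List A) (k : ℕ) : wordFactor u k k = [] := by
  simp [wordFactor]

lemma wordFactor_single (u : List A) {t : ℕ} (ht1 : 1 ≤ t) (ht : t ≤ u.length) :
    ∃ c, wordFactor u t (t + 1) = [c] := by
  have hne : u.drop (t - 1) ≠ [] := by
    apply List.ne_nil_of_length_pos
    rw [List.length_drop]
    omega
  obtain ⟨c, l', hcl⟩ := List.exists_cons_of_ne_nil hne
  refine ⟨c, ?_⟩
  unfold wordFactor
  rw [hcl, show t + 1 - t = 1 by omega]
  rfl

lemma mem_wordFactor_mono (u : List A) {p m i' i : ℕ} (hp : 1 ≤ p) (hpm : p ≤ m)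
    (hmi' : m ≤ i') (hi' : i' ≤ i) {c : A} (hc : c ∈ wordFactor u m i') :
    c ∈ wordFactor u p i := by
  rw [wordFactor_split u hp hpm (hmi'.trans hi'),
      wordFactor_split u (hp.trans hpm) hmi' hi']
  simp only [List.mem_append]
  tauto

lemma right_letter_notMem {n : ℕ} {u : List A} {p i : ℕ}
    (hmax : IsMaxNLongFactor n u p i) (hi : i ≤ u.length) {c : A}
    (hc : wordFactor u i (i + 1) = [c]) : c ∉ wordFactor u p i := by
  obtain ⟨h1, h2, h3, hNL, hM⟩ := hmax
  intro hmem
  have hsplit : wordFactor u p (i + 1) = wordFactor u p i ++ wordFactor u i (i + 1) :=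
    wordFactor_split u h1 h2 (Nat.le_succ i)
  have hNL' : IsNLong n (wordFactor u p (i + 1)) := by
    rw [hsplit, hc]
    refine isNLong_append n hNL (fun c' hc' => ?_)
    simp only [List.mem_singleton] at hc'
    subst hc'
    exact hmem
  have := (hM p (i + 1) h1 le_rfl (Nat.le_succ i) (by omega) hNL').2
  omega

lemma left_letter_notMem {n : ℕ} {u : List A} {a b : ℕ}
    (hmax : IsMaxNLongFactor n u a b) (ha : 2 ≤ a) {c : A}
    (hc : wordFactor u (a - 1) a = [c]) : c ∉ wordFactor u a b := by
  obtain ⟨h1, h2, h3, hNL, hM⟩ := hmax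
  intro hmem
  have hsplit : wordFactor u (a - 1) b = wordFactor u (a - 1) a ++ wordFactor u a b :=
    wordFactor_split u (by omega) (by omega) h2
  have hNL' : IsNLong n (wordFactor u (a - 1) b) := by
    rw [hsplit, hc]
    refine isNLong_prepend n hNL (fun c' hc' => ?_)
    simp only [List.mem_singleton] at hc'
    subst hc'
    exact hmem
  have := (hM (a - 1) b (by omega) (by omega) le_rfl h3 hNL').1
  omega

lemma sublist_pair_left {X Y : List A} {e f : A} (h : List.Sublist [e, f] (X ++ Y)) (hf : f ∉ Y) :
    List.Sublist [e, f] X := by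
  rw [List.sublist_append_iff] at h
  obtain ⟨l1, l2, heq, h1, h2⟩ := h
  rcases l1 with _ | ⟨x, _ | ⟨y, l⟩⟩
  · simp only [List.nil_append] at heq
    exact absurd (h2.subset (by rw [← heq]; simp)) hf
  · simp only [List.cons_append, List.nil_append] at heq
    injection heq with h3 h4
    exact absurd (h2.subset (by rw [← h4]; simp)) hf
  · simp only [List.cons_append] at heq
    injection heq with h3 heq
    injection heq with h4 heq
    have hl := List.append_eq_nil_iff.1 heq.symm
    subst h3; subst h4
    rw [hl.1] at h1
    exact h1

lemma mem_left_of_pair_sublist {X Y : List A} {e f : A} (h : List.Sublist [e, f] (X ++ Y))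
    (hY : Y.length ≤ 1) : e ∈ X := by
  rw [List.sublist_append_iff] at h
  obtain ⟨l1, l2, heq, h1, h2⟩ := h
  rcases l1 with _ | ⟨x, l⟩
  · have hlen := h2.length_le
    simp only [List.nil_append] at heq
    rw [← heq] at hlen
    simp at hlen
    omega
  · simp only [List.cons_append] at heq
    injection heq with h3 _
    subst h3
    exact h1.subset (by simp)

lemma exists_max_containing (n : ℕ) (u : List A) {k : ℕ} (hk1 : 1 ≤ k)
    (hk : k ≤ u.length + 1) : ∃ a b, a ≤ k ∧ k ≤ b ∧ IsMaxNLongFactor n u a b := by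
  classical
  set P : ℕ → Prop := fun b => k ≤ b ∧ ∃ a, 1 ≤ a ∧ a ≤ k ∧ IsNLong n (wordFactor u a b)
    with hPdef
  have hPk : P k := ⟨le_rfl, k, hk1, le_rfl, by rw [wordFactor_self]; exact isNLong_nil n⟩
  have hPb : P (Nat.findGreatest P (u.length + 1)) := Nat.findGreatest_spec hk hPk
  set b := Nat.findGreatest P (u.length + 1) with hbdef
  obtain ⟨hkb, hQex⟩ := hPb
  obtain ⟨ha1, hak, haNL⟩ := Nat.find_spec hQex
  set a := Nat.find hQex with hadef
  refine ⟨a, b, hak, hkb, ha1, hak.trans hkb, Nat.findGreatest_le _, haNL, ?_⟩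
  intro i' j' hi'1 hi'a hbj' hj' hNL'
  have hj'b : j' = b := by
    by_contra hne
    have hbj : b < j' := lt_of_le_of_ne hbj' (Ne.symm hne)
    exact Nat.findGreatest_is_greatest hbj hj'
      ⟨hkb.trans hbj', i', hi'1, hi'a.trans hak, hNL'⟩
  subst hj'b
  have hia : ¬ i' < a := fun hlt => Nat.find_min hQex hlt ⟨hi'1, hi'a.trans hak, hNL'⟩
  exact ⟨by omega, rfl⟩

end Aux

/-- Between any two elements of `R_n(u)` there is an element of `L_n(u)`. -/
theorem Lset_between_Rset {A : Type*} (u : List A) (n : ℕ) (hn : 2 ≤ n)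
    (i j : ℕ) (hi : i ∈ Rset n u) (hj : j ∈ Rset n u) (hij : i < j) :
    ∃ k ∈ Lset n u, i < k ∧ k ≤ j := by
  simp only [Rset, Set.mem_union, Set.mem_singleton_iff, Set.mem_setOf_eq] at hi hj
  obtain ⟨m, hmj⟩ : ∃ m, IsMaxNLongFactor n u m j := by
    rcases hj with hj0 | hj'
    · omega
    · exact hj'
  obtain ⟨hm1, hmj2, hjle, hNLmj, hmaxmj⟩ := hmj
  by_cases hc1 : i + 2 ≤ m
  · refine ⟨m - 1, ?_, by omega, by omega⟩
    simp only [Lset, Set.mem_union, Set.mem_singleton_iff, Set.mem_setOf_eq]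
    right
    refine ⟨j, ?_⟩
    rw [show m - 1 + 1 = m by omega]
    exact ⟨hm1, hmj2, hjle, hNLmj, hmaxmj⟩
  · push_neg at hc1
    by_cases hc2 : j = u.length + 1
    · refine ⟨u.length + 1, ?_, by omega, by omega⟩
      simp only [Lset, Set.mem_union, Set.mem_singleton_iff, Set.mem_setOf_eq]
      left; trivial
    · have hjlen : j ≤ u.length := by omega
      obtain ⟨a, b, hak, hkb, hab⟩ := exists_max_containing n u (k := j + 1)
        (by omega) (by omega)
      obtain ⟨ha1, hab2, hble, hNLab, hmaxab⟩ := hab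
      by_cases hc3 : i + 2 ≤ a
      · refine ⟨a - 1, ?_, by omega, by omega⟩
        simp only [Lset, Set.mem_union, Set.mem_singleton_iff, Set.mem_setOf_eq]
        right
        refine ⟨b, ?_⟩
        rw [show a - 1 + 1 = a by omega]
        exact ⟨ha1, hab2, hble, hNLab, hmaxab⟩
      · push_neg at hc3
        exfalso
        have hjb : j + 1 ≤ b := hkb
        by_cases hma : a ≤ m
        · have := (hmaxmj a b ha1 hma (by omega) hble hNLab).2
          omega
        · push_neg at hma
          have hi1 : 1 ≤ i := by omega
          obtain ⟨p, hpi⟩ : ∃ p, IsMaxNLongFactor n u p i := by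
            rcases hi with hi0 | hi'
            · omega
            · exact hi'
          have hp1 : 1 ≤ p := hpi.1
          have hpm : p < m := by
            by_contra hpm
            push_neg at hpm
            have := (hpi.2.2.2.2 m j hm1 hpm (by omega) hjle hNLmj).2
            omega
          have hilen : i ≤ u.length := by omega
          obtain ⟨e, he⟩ := wordFactor_single u hi1 hilen
          obtain ⟨f, hf⟩ := wordFactor_single u (t := a - 1) (by omega) (by omega)
          have hfa : wordFactor u (a - 1) a = [f] := by
            rw [show a = a - 1 + 1 by omega]; exact hf
          have heN : e ∉ wordFactor u p i := right_letter_notMem hpi hilen he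
          have hfN : f ∉ wordFactor u a b :=
            left_letter_notMem ⟨ha1, hab2, hble, hNLab, hmaxab⟩ (by omega) hfa
          have heM : e ∈ wordFactor u m j := by
            have hsp : wordFactor u m j
                = wordFactor u m i ++ (wordFactor u i (i + 1) ++ wordFactor u (i + 1) j) := by
              rw [wordFactor_split u hm1 (by omega : m ≤ i) (by omega : i ≤ j),
                wordFactor_split u (by omega : 1 ≤ i) (Nat.le_succ i) (by omega : i + 1 ≤ j)]
            rw [hsp, he]; simp
          have hfM : f ∈ wordFactor u m j := by
            have hsp : wordFactor u m j
                = wordFactor u m (a - 1) ++ (wordFactor u (a - 1) a ++ wordFactor u a j) := by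
              rw [wordFactor_split u hm1 (by omega : m ≤ a - 1) (by omega : a - 1 ≤ j),
                wordFactor_split u (by omega : 1 ≤ a - 1) (by omega : a - 1 ≤ a)
                  (by omega : a ≤ j)]
            rw [hsp, hfa]; simp
          have hsub : List.Sublist [e, f] (wordFactor u m j) := by
            refine hNLmj [e, f] (fun c hc => ?_) (by simp; omega)
            simp only [List.mem_cons, List.mem_singleton, List.not_mem_nil, or_false] at hc
            rcases hc with rfl | rfl
            · exact heM
            · exact hfM
          rw [wordFactor_split u hm1 (by omega : m ≤ a) (by omega : a ≤ j)] at hsub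
          have hsub2 : List.Sublist [e, f] (wordFactor u m a) :=
            sublist_pair_left hsub (fun hmem => hfN
              (mem_wordFactor_mono u ha1 le_rfl (by omega : a ≤ j) (by omega : j ≤ b) hmem))
          rw [wordFactor_split u hm1 (by omega : m ≤ a - 1) (by omega : a - 1 ≤ a)] at hsub2
          have heQ : e ∈ wordFactor u m (a - 1) :=
            mem_left_of_pair_sublist hsub2 (by rw [hfa]; simp)
          exact heN (mem_wordFactor_mono u hp1 hpm.le (by omega : m ≤ a - 1)
            (by omega : a - 1 ≤ i) heQ)
end
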